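/- Let R ⊆ ℂ^{2ℓ} be the set of all time-reversible systems of the family. Then the Zariski closure of R (the closure of R in the Zariski topology of ℂ^{2ℓ}, equivalently the smallest affine variety containing R) equals V(I_S), the variety of the Sibirsky ideal. -/

import Mathlib

open MvPolynomial

noncomputable section

/-- Index in `Fin (2*ℓ)` of the coefficient `a_k` (0-indexed position `k`). -/
def aIdx (l : ℕ) (k : Fin l) : Fin (2 * l) :=
  ⟨(k : ℕ), by have := k.isLt; omega⟩

/-- Index in `Fin (2*ℓ)` of the coefficient `b_k` (0-indexed position `2ℓ-1-k`),
    matching the ordering `(a₁,…,a_ℓ, b_ℓ,…,b₁)`. -/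
def bIdx (l : ℕ) (k : Fin l) : Fin (2 * l) :=
  ⟨2 * l - 1 - (k : ℕ), by have := k.isLt; omega⟩

/-- The vector `ζ = (p₁−q₁, …, p_ℓ−q_ℓ, q_ℓ−p_ℓ, …, q₁−p₁)`. -/
def zeta {l : ℕ} (p : Fin l → ℤ) (q : Fin l → ℕ) : Fin (2 * l) → ℤ := fun i =>
  if h : (i : ℕ) < l then p ⟨(i : ℕ), h⟩ - (q ⟨(i : ℕ), h⟩ : ℤ)
  else (q ⟨2 * l - 1 - (i : ℕ), by have := i.isLt; omega⟩ : ℤ) -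
    p ⟨2 * l - 1 - (i : ℕ), by have := i.isLt; omega⟩

/-- Dot product of an integer vector with a vector of natural numbers. -/
def zdot {n : ℕ} (z : Fin n → ℤ) (v : Fin n → ℕ) : ℤ := ∑ i, z i * (v i : ℤ)

/-- Reversal (involution) of a vector: `ν̂ = (ν_{2ℓ}, …, ν₁)`. -/
def revVec {n : ℕ} {α : Type*} (v : Fin n → α) : Fin n → α := fun i => v i.rev

/-- The monomial `[ν] = a₁^{ν₁}⋯a_ℓ^{ν_ℓ}·b_ℓ^{ν_{ℓ+1}}⋯b₁^{ν_{2ℓ}}` in the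
    polynomial ring in `2ℓ` variables. -/
def monX {K : Type*} [CommSemiring K] {n : ℕ} (v : Fin n → ℕ) :
    MvPolynomial (Fin n) K :=
  ∏ i, (X i) ^ (v i)

/-- Time-reversibility of the coefficient vector `x = (a,b)`: there is `γ ≠ 0`
    with `b_k = γ^{p_k−q_k}·a_k` for all `k`. -/
def TimeRev {K : Type*} [Field K] {l : ℕ} (p : Fin l → ℤ) (q : Fin l → ℕ)
    (x : Fin (2 * l) → K) : Prop :=
  ∃ γ : K, γ ≠ 0 ∧ ∀ k : Fin l, x (bIdx l k) = γ ^ (p k - (q k : ℤ)) * x (aIdx l k)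

/-- The Sibirsky ideal `I_S = ⟨[ν] − [ν̂] : ν ∈ M⟩`. -/
def sibirsky (K : Type*) [CommRing K] {l : ℕ} (p : Fin l → ℤ) (q : Fin l → ℕ) :
    Ideal (MvPolynomial (Fin (2 * l)) K) :=
  Ideal.span {f | ∃ v : Fin (2 * l) → ℕ,
    zdot (zeta p q) v = 0 ∧ f = monX v - monX (revVec v)}

/-- The homomorphism `ψ₀ : K[a₁,…,a_ℓ,b_ℓ,…,b₁] → K(γ,t₁,…,t_ℓ)`,
    `a_k ↦ t_k`, `b_k ↦ γ^{p_k−q_k}·t_k`; here `γ` is the image of `X 0` and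
    `t_k` the image of `X k.succ` in the fraction field of `K[X₀,…,X_ℓ]`. -/
def psi0 {K : Type*} [Field K] {l : ℕ} (p : Fin l → ℤ) (q : Fin l → ℕ) :
    MvPolynomial (Fin (2 * l)) K →ₐ[K] FractionRing (MvPolynomial (Fin (l + 1)) K) :=
  aeval fun i =>
    if h : (i : ℕ) < l then
      algebraMap (MvPolynomial (Fin (l + 1)) K)
        (FractionRing (MvPolynomial (Fin (l + 1)) K)) (X (Fin.succ ⟨(i : ℕ), h⟩))
    else
      (algebraMap (MvPolynomial (Fin (l + 1)) K)
          (FractionRing (MvPolynomial (Fin (l + 1)) K)) (X 0)) ^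
        (p ⟨2 * l - 1 - (i : ℕ), by have := i.isLt; omega⟩ -
          (q ⟨2 * l - 1 - (i : ℕ), by have := i.isLt; omega⟩ : ℤ)) *
      algebraMap (MvPolynomial (Fin (l + 1)) K)
        (FractionRing (MvPolynomial (Fin (l + 1)) K))
        (X (Fin.succ ⟨2 * l - 1 - (i : ℕ), by have := i.isLt; omega⟩))

/-- The linear map `U_η`, multiplying the coordinate `a_k` by `η^{q_k−p_k}` and the
    coordinate `b_k` by `η^{p_k−q_k}`. -/
def Ueta {K : Type*} [Field K] {l : ℕ} (p : Fin l → ℤ) (q : Fin l → ℕ) (η : K)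
    (x : Fin (2 * l) → K) : Fin (2 * l) → K := fun i =>
  if h : (i : ℕ) < l then η ^ ((q ⟨(i : ℕ), h⟩ : ℤ) - p ⟨(i : ℕ), h⟩) * x i
  else η ^ (p ⟨2 * l - 1 - (i : ℕ), by have := i.isLt; omega⟩ -
    (q ⟨2 * l - 1 - (i : ℕ), by have := i.isLt; omega⟩ : ℤ)) * x i

/-- The orbit of `x` under the group `{U_η : η ≠ 0}`. -/
def orbitU {K : Type*} [Field K] {l : ℕ} (p : Fin l → ℤ) (q : Fin l → ℕ)
    (x : Fin (2 * l) → K) : Set (Fin (2 * l) → K) :=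
  {y | ∃ η : K, η ≠ 0 ∧ y = Ueta p q η x}


/-!
On a time-reversible point `y` one has `y (rev i) = γ ^ ζ i * y i`, hence
`[ν̂](y) = γ ^ (ζ·ν) * [ν](y)`, and every generator of `I_S` vanishes on `R`.
Conversely, `R` contains the image of the monomial map `X i ↦ γ ^ max(-ζ i, 0) * t i * t (rev i)`
on `γ ≠ 0`, so a polynomial vanishing on `R` lies in the kernel of this monomial map.
That kernel is spanned by binomials `[d] - [e]` whose images agree, i.e. with
`d i + d (rev i) = e i + e (rev i)` and `ζ·d = ζ·e`; removing the common factor `[d ⊓ e]`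
turns such a binomial into a multiple of `[τ] - [τ̂]` with `τ = d - e` and `ζ·τ = 0`.
Hence the vanishing ideal of `R` is `I_S`, and the two varieties coincide.
-/

namespace MvPolynomial

variable {σ τ R : Type*} [CommRing R]

/-- Modulo `I` every monomial may be moved to a fixed representative of its `κ`-fibre, and the
coefficients of `f` sum to zero along each fibre. -/
theorem mem_of_sum_monomial_eq_zero {I : Ideal (MvPolynomial σ R)} (κ : (σ →₀ ℕ) → τ →₀ ℕ)
    (hI : ∀ d e, κ d = κ e → monomial d (1 : R) - monomial e 1 ∈ I) {f : MvPolynomial σ R}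
    (hf : ∑ d ∈ f.support, monomial (κ d) (coeff d f) = 0) : f ∈ I := by
  classical
  set r := Function.invFun κ
  have hr : ∀ d, κ (r (κ d)) = κ d := fun d => Function.invFun_eq ⟨d, rfl⟩
  have h0 : ∑ d ∈ f.support, monomial (r (κ d)) (coeff d f) = 0 := by
    simpa [map_sum, ← single_eq_monomial] using
      congrArg (AddMonoidAlgebra.mapDomainLinearMap R R r) hf
  rw [← sub_zero f, ← h0]
  nth_rewrite 1 [f.as_sum]
  rw [← Finset.sum_sub_distrib]
  refine Ideal.sum_mem _ fun d _ => ?_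
  have h : monomial d (coeff d f) - monomial (r (κ d)) (coeff d f) =
      C (coeff d f) * (monomial d 1 - monomial (r (κ d)) 1) := by
    rw [mul_sub, C_mul_monomial, C_mul_monomial, mul_one]
  rw [h]
  exact Ideal.mul_mem_left _ _ (hI _ _ (hr d).symm)

theorem bind₁_monomial_one (w : σ → τ →₀ ℕ) (d : σ →₀ ℕ) (c : R) :
    bind₁ (fun i => monomial (w i) (1 : R)) (monomial d c) =
      monomial (Finsupp.linearCombination ℕ w d) c := by
  rw [bind₁_monomial, Finsupp.linearCombination_apply, monomial_finsupp_sum_index]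
  simp [monomial_pow, Finsupp.prod]

theorem mem_of_bind₁_monomial_eq_zero {I : Ideal (MvPolynomial σ R)} (w : σ → τ →₀ ℕ)
    (hI : ∀ d e, Finsupp.linearCombination ℕ w d = Finsupp.linearCombination ℕ w e →
      monomial d (1 : R) - monomial e 1 ∈ I) {f : MvPolynomial σ R}
    (hf : bind₁ (fun i => monomial (w i) (1 : R)) f = 0) : f ∈ I := by
  refine mem_of_sum_monomial_eq_zero _ hI ?_
  rw [← hf]
  conv_rhs => rw [f.as_sum]
  simp only [map_sum, bind₁_monomial_one]

theorem eval_bind₁ (x : τ → R) (g : σ → MvPolynomial τ R) (f : MvPolynomial σ R) :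
    eval x (bind₁ g f) = eval (fun i => eval x (g i)) f :=
  eval₂Hom_bind₁ _ _ _ _

end MvPolynomial

/-- `sibirsky K p q` is by definition `revBinomialIdeal K (zeta p q)`. -/
def revBinomialIdeal (K : Type*) [CommRing K] {n : ℕ} (z : Fin n → ℤ) :
    Ideal (MvPolynomial (Fin n) K) :=
  Ideal.span {f | ∃ v : Fin n → ℕ, zdot z v = 0 ∧ f = monX v - monX (revVec v)}

def IsReversible {K : Type*} [Field K] {n : ℕ} (z : Fin n → ℤ) (y : Fin n → K) : Prop :=
  ∃ γ : K, γ ≠ 0 ∧ ∀ i, y i.rev = γ ^ z i * y i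

section

variable {n : ℕ}

theorem zdot_add (z : Fin n → ℤ) (u v : Fin n → ℕ) : zdot z (u + v) = zdot z u + zdot z v := by
  simp only [zdot, Pi.add_apply, Nat.cast_add, mul_add, Finset.sum_add_distrib]

theorem zdot_revVec {z : Fin n → ℤ} (hz : ∀ i, z i.rev = -z i) (v : Fin n → ℕ) :
    zdot z (revVec v) = -zdot z v := by
  rw [zdot, zdot, ← Finset.sum_neg_distrib, ← Equiv.sum_comp Fin.revPerm]
  simp [revVec, hz]

theorem monX_add {K : Type*} [CommSemiring K] (u v : Fin n → ℕ) :
    (monX (u + v) : MvPolynomial (Fin n) K) = monX u * monX v := by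
  simp only [monX, Pi.add_apply, pow_add, Finset.prod_mul_distrib]

theorem eval_monX {K : Type*} [CommSemiring K] (y : Fin n → K) (v : Fin n → ℕ) :
    eval y (monX v) = ∏ i, y i ^ v i := by
  simp [monX]

theorem monomial_one_eq_monX {K : Type*} [CommSemiring K] (d : Fin n →₀ ℕ) :
    monomial d (1 : K) = monX ⇑d := by
  rw [monomial_eq, C_1, one_mul, Finsupp.prod_fintype _ _ fun _ => pow_zero _, monX]

theorem zpow_sum₀ {G₀ : Type*} [CommGroupWithZero G₀] {γ : G₀} (hγ : γ ≠ 0) {ι : Type*}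
    (s : Finset ι) (f : ι → ℤ) : γ ^ (∑ i ∈ s, f i) = ∏ i ∈ s, γ ^ f i := by
  classical
  induction s using Finset.induction with
  | empty => simp
  | insert _ _ h ih => rw [Finset.sum_insert h, Finset.prod_insert h, zpow_add₀ hγ, ih]

variable {K : Type*} [Field K] {z : Fin n → ℤ}

theorem eval_monX_revVec {y : Fin n → K} {γ : K} (hγ : γ ≠ 0)
    (hy : ∀ i, y i.rev = γ ^ z i * y i) (v : Fin n → ℕ) :
    eval y (monX (revVec v)) = γ ^ zdot z v * eval y (monX v) := by
  rw [eval_monX, eval_monX, ← Equiv.prod_comp Fin.revPerm, zdot, zpow_sum₀ hγ,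
    ← Finset.prod_mul_distrib]
  refine Finset.prod_congr rfl fun i _ => ?_
  simp [revVec, hy, mul_pow, zpow_mul]

theorem eval_eq_zero_of_mem_revBinomialIdeal {y : Fin n → K} (hy : IsReversible z y)
    {f : MvPolynomial (Fin n) K} (hf : f ∈ revBinomialIdeal K z) : eval y f = 0 := by
  obtain ⟨γ, hγ, hyγ⟩ := hy
  refine (Ideal.span_le (I := RingHom.ker (eval y))).mpr ?_ hf
  rintro _ ⟨v, hv, rfl⟩
  rw [SetLike.mem_coe, RingHom.mem_ker, map_sub, eval_monX_revVec hγ hyγ, hv, zpow_zero,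
    one_mul, sub_self]

theorem monX_sub_monX_mem_revBinomialIdeal (hz : ∀ i, z i.rev = -z i) {d e : Fin n → ℕ}
    (hs : ∀ i, d i + d i.rev = e i + e i.rev) (hze : zdot z d = zdot z e) :
    (monX d - monX e : MvPolynomial (Fin n) K) ∈ revBinomialIdeal K z := by
  have hrev : revVec (d - e) = e - d := funext fun i => by
    have := hs i.rev
    simp only [revVec, Pi.sub_apply, Fin.rev_rev] at this ⊢
    omega
  obtain ⟨τ, m, rfl, rfl⟩ : ∃ τ m, d = τ + m ∧ e = revVec τ + m := by
    refine ⟨d - e, d ⊓ e, funext fun i => ?_, funext fun i => ?_⟩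
    · simp only [Pi.add_apply, Pi.sub_apply, Pi.inf_apply]; omega
    · simp only [hrev, Pi.add_apply, Pi.sub_apply, Pi.inf_apply]; omega
  have hτ : zdot z τ = 0 := by
    rw [zdot_add, zdot_add, zdot_revVec hz] at hze
    omega
  rw [monX_add, monX_add, ← sub_mul]
  exact Ideal.mul_mem_right _ _ (Ideal.subset_span ⟨τ, hτ, rfl⟩)

theorem zdot_eq_of_antisymm (hz : ∀ i, z i.rev = -z i) (v : Fin n → ℕ) :
    zdot z v = ((∑ i, (-z i).toNat * (v i + v i.rev) : ℕ) : ℤ) -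
      2 * ((∑ i, (-z i).toNat * v i : ℕ) : ℤ) := by
  have hrev : ∑ i, ((-z i).toNat : ℤ) * v i.rev = ∑ i, ((z i).toNat : ℤ) * v i := by
    rw [← Equiv.sum_comp Fin.revPerm]
    simp [hz]
  calc zdot z v = ∑ i, (((z i).toNat : ℤ) * v i - ((-z i).toNat : ℤ) * v i) := by
        simp_rw [zdot, ← sub_mul, Int.toNat_sub_toNat_neg]
    _ = _ := by
        push_cast
        simp only [mul_add, Finset.sum_add_distrib, hrev, Finset.sum_sub_distrib]
        ring

/-- Exponent of the image of `X i` under the monomial map parametrising reversible points: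
`X i ↦ γ ^ max (-z i) 0 * t i * t (rev i)`, with `γ = X none` and `t j = X (some j)`. -/
def revExponent (z : Fin n → ℤ) (i : Fin n) : Option (Fin n) →₀ ℕ :=
  Finsupp.single none (-z i).toNat + Finsupp.single (some i) 1 + Finsupp.single (some i.rev) 1

theorem linearCombination_revExponent_none (d : Fin n →₀ ℕ) :
    Finsupp.linearCombination ℕ (revExponent z) d none = ∑ i, (-z i).toNat * d i := by
  simp [Finsupp.linearCombination_apply, Finsupp.sum_fintype, revExponent, mul_comm]

theorem linearCombination_revExponent_some (d : Fin n →₀ ℕ) (j : Fin n) :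
    Finsupp.linearCombination ℕ (revExponent z) d (some j) = d j + d j.rev := by
  simp [Finsupp.linearCombination_apply, Finsupp.sum_fintype, revExponent, Finsupp.single_apply,
    Finset.sum_add_distrib, Fin.rev_eq_iff]

theorem eval_monomial_revExponent (x : Option (Fin n) → K) (i : Fin n) :
    eval x (monomial (revExponent z i) 1) =
      x none ^ (-z i).toNat * x (some i) * x (some i.rev) := by
  have : monomial (revExponent z i) (1 : K) =
      X none ^ (-z i).toNat * X (some i) * X (some i.rev) := by
    rw [X_pow_eq_monomial, X, X, monomial_mul, monomial_mul, mul_one, mul_one, revExponent]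
  simp [this]

theorem isReversible_eval_monomial_revExponent (hz : ∀ i, z i.rev = -z i)
    {x : Option (Fin n) → K} (hx : x none ≠ 0) :
    IsReversible z fun i => eval x (monomial (revExponent z i) 1) := by
  refine ⟨x none, hx, fun i => ?_⟩
  have hpow : x none ^ (z i).toNat = x none ^ z i * x none ^ (-z i).toNat := by
    rw [← zpow_natCast, ← zpow_natCast, ← zpow_add₀ hx]
    congr 1
    omega
  simp only [eval_monomial_revExponent, hz, neg_neg, Fin.rev_rev, hpow]
  ring

theorem pair_sums_and_zdot_eq_of_linearCombination_revExponent_eq (hz : ∀ i, z i.rev = -z i)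
    {d e : Fin n →₀ ℕ}
    (h : Finsupp.linearCombination ℕ (revExponent z) d =
      Finsupp.linearCombination ℕ (revExponent z) e) :
    (∀ i, d i + d i.rev = e i + e i.rev) ∧ zdot z d = zdot z e := by
  have hs : ∀ i, d i + d i.rev = e i + e i.rev := fun i => by
    simpa only [linearCombination_revExponent_some] using DFunLike.congr_fun h (some i)
  have hnone := DFunLike.congr_fun h none
  simp only [linearCombination_revExponent_none] at hnone
  refine ⟨hs, ?_⟩
  rw [zdot_eq_of_antisymm hz, zdot_eq_of_antisymm hz, hnone]
  simp only [hs]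

theorem mem_revBinomialIdeal_of_forall_eval_eq_zero [Infinite K] (hz : ∀ i, z i.rev = -z i)
    {f : MvPolynomial (Fin n) K} (hf : ∀ y, IsReversible z y → eval y f = 0) :
    f ∈ revBinomialIdeal K z := by
  have hbind : bind₁ (fun i => monomial (revExponent z i) (1 : K)) f = 0 := by
    have h : X none * bind₁ (fun i => monomial (revExponent z i) (1 : K)) f = 0 := by
      refine MvPolynomial.funext fun x => ?_
      rw [map_mul, eval_X, map_zero]
      rcases eq_or_ne (x none) 0 with h0 | h0
      · rw [h0, zero_mul]
      · rw [eval_bind₁, hf _ (isReversible_eval_monomial_revExponent hz h0), mul_zero]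
    exact (mul_eq_zero.mp h).resolve_left (X_ne_zero _)
  refine mem_of_bind₁_monomial_eq_zero _ (fun d e hde => ?_) hbind
  obtain ⟨hs, hze⟩ := pair_sums_and_zdot_eq_of_linearCombination_revExponent_eq hz hde
  rw [monomial_one_eq_monX, monomial_one_eq_monX]
  exact monX_sub_monX_mem_revBinomialIdeal hz hs hze

theorem vanishingIdeal_setOf_isReversible [Infinite K] (hz : ∀ i, z i.rev = -z i) :
    vanishingIdeal K {y : Fin n → K | IsReversible z y} = revBinomialIdeal K z := by
  ext f
  simp only [mem_vanishingIdeal_iff, Set.mem_ofPred_eq, aeval_eq_eval]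
  exact ⟨mem_revBinomialIdeal_of_forall_eval_eq_zero hz,
    fun hf _ hy => eval_eq_zero_of_mem_revBinomialIdeal hy hf⟩

end

section

variable {l : ℕ}

theorem rev_aIdx (k : Fin l) : (aIdx l k).rev = bIdx l k := by
  ext
  simp only [Fin.val_rev, aIdx, bIdx]
  omega

theorem rev_bIdx (k : Fin l) : (bIdx l k).rev = aIdx l k := by
  rw [← rev_aIdx, Fin.rev_rev]

theorem aIdx_or_bIdx (i : Fin (2 * l)) : (∃ k, i = aIdx l k) ∨ ∃ k, i = bIdx l k := by
  by_cases h : (i : ℕ) < l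
  · exact Or.inl ⟨⟨i, h⟩, rfl⟩
  · refine Or.inr ⟨⟨2 * l - 1 - i, by omega⟩, ?_⟩
    ext
    simp only [bIdx]
    omega

theorem zeta_aIdx (p : Fin l → ℤ) (q : Fin l → ℕ) (k : Fin l) :
    zeta p q (aIdx l k) = p k - q k :=
  dif_pos k.isLt

theorem zeta_bIdx (p : Fin l → ℤ) (q : Fin l → ℕ) (k : Fin l) :
    zeta p q (bIdx l k) = q k - p k := by
  have h : ¬((bIdx l k : ℕ) < l) := by simp only [bIdx]; omega
  have hk : 2 * l - 1 - (bIdx l k : ℕ) = k := by simp only [bIdx]; omega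
  simp only [zeta, h, dif_neg, not_false_iff, hk]

theorem zeta_rev (p : Fin l → ℤ) (q : Fin l → ℕ) (i : Fin (2 * l)) :
    zeta p q i.rev = -zeta p q i := by
  rcases aIdx_or_bIdx i with ⟨k, rfl⟩ | ⟨k, rfl⟩
  · rw [rev_aIdx, zeta_aIdx, zeta_bIdx, neg_sub]
  · rw [rev_bIdx, zeta_aIdx, zeta_bIdx, neg_sub]

theorem timeRev_iff_isReversible {K : Type*} [Field K] (p : Fin l → ℤ) (q : Fin l → ℕ)
    (y : Fin (2 * l) → K) : TimeRev p q y ↔ IsReversible (zeta p q) y := by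
  constructor
  · rintro ⟨γ, hγ, h⟩
    refine ⟨γ, hγ, fun i => ?_⟩
    rcases aIdx_or_bIdx i with ⟨k, rfl⟩ | ⟨k, rfl⟩
    · rw [rev_aIdx, zeta_aIdx, h]
    · rw [rev_bIdx, zeta_bIdx, h, ← neg_sub, ← mul_assoc, ← zpow_add₀ hγ,
        neg_add_cancel, zpow_zero, one_mul]
  · rintro ⟨γ, hγ, h⟩
    exact ⟨γ, hγ, fun k => by simpa only [rev_aIdx, zeta_aIdx] using h (aIdx l k)⟩

end

theorem stmt11_general {l : ℕ} (p : Fin l → ℤ) (q : Fin l → ℕ) :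
    {x : Fin (2 * l) → ℂ | ∀ f : MvPolynomial (Fin (2 * l)) ℂ,
        (∀ y : Fin (2 * l) → ℂ, TimeRev p q y → eval y f = 0) → eval x f = 0} =
      {x : Fin (2 * l) → ℂ | ∀ f ∈ sibirsky ℂ p q, eval x f = 0} := by
  have hvan : vanishingIdeal ℂ {y : Fin (2 * l) → ℂ | TimeRev p q y} = sibirsky ℂ p q := by
    simp only [timeRev_iff_isReversible]
    exact vanishingIdeal_setOf_isReversible (zeta_rev p q)
  ext x
  simp only [Set.mem_ofPred_eq, ← hvan, mem_vanishingIdeal_iff, aeval_eq_eval]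

theorem stmt11 {l : ℕ} (hl : 0 < l) (p : Fin l → ℤ) (q : Fin l → ℕ)
    (hp : ∀ k, -1 ≤ p k) (hpq : ∀ k, 0 ≤ p k + (q k : ℤ))
    (hdist : Function.Injective fun k => (p k, q k)) :
    {x : Fin (2 * l) → ℂ | ∀ f : MvPolynomial (Fin (2 * l)) ℂ,
        (∀ y : Fin (2 * l) → ℂ, TimeRev p q y → eval y f = 0) → eval x f = 0} =
      {x : Fin (2 * l) → ℂ | ∀ f ∈ sibirsky ℂ p q, eval x f = 0} :=
  stmt11_general p q
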